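/- Let (X_n)_{n≥1} be i.i.d. real random variables with zero mean such that P(|S_n| ≥ εn) ≤ e^{−c_ε n} for all large n (large deviation bound), and with finite exponential moment. Then for every ε > 0, the sum over n of P( max_{|i−n| ≤ M√(n log log n)} |S_i − S_n| ≥ ε·M√(n log log n) ) is finite. -/

import Mathlib

/-!
The increment `S i - S n` over the window `|i - n| ≤ k n` is a sum of at most `k n` i.i.d. copies
of `X 0`. As `X 0` is centred and has an exponential moment, its mgf is differentiable at `0` with
derivative `E[X 0] = 0`, so `mgf (X 0) (±t) ≤ exp (ε t / 2)` for some small `t > 0`, and a two-sided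
Chernoff bound gives `P(|S i - S n| ≥ ε k n) ≤ 2 exp (-t ε k n / 2)`. A union bound over the `O(n)`
indices of the window, together with `k n ≥ M √n`, bounds the `n`-th term by `O(n exp (-c √n))`,
which is summable.
-/

open MeasureTheory ProbabilityTheory Filter

open Real Topology Finset

namespace ProbabilityTheory

section CentredMGF

variable {Ω : Type*} {m : MeasurableSpace Ω} {μ : Measure Ω} {X : Ω → ℝ} {c : ℝ}

lemma integrable_exp_mul_of_integrable_exp_mul_abs (hX : AEMeasurable X μ)
    (hc : Integrable (fun ω ↦ exp (c * |X ω|)) μ) {t : ℝ} (ht : |t| ≤ c) :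
    Integrable (fun ω ↦ exp (t * X ω)) μ := by
  refine hc.mono' (aemeasurable_exp_mul t hX) (ae_of_all _ fun ω ↦ ?_)
  rw [norm_eq_abs, abs_exp, exp_le_exp]
  calc t * X ω ≤ |t| * |X ω| := (le_abs_self _).trans (abs_mul _ _).le
    _ ≤ c * |X ω| := by gcongr

lemma zero_mem_interior_integrableExpSet (hX : AEMeasurable X μ) (hc₀ : 0 < c)
    (hc : Integrable (fun ω ↦ exp (c * |X ω|)) μ) :
    0 ∈ interior (integrableExpSet X μ) :=
  mem_interior_iff_mem_nhds.2 <| mem_of_superset (Ioo_mem_nhds (neg_neg_iff_pos.2 hc₀) hc₀)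
    fun _ ht ↦ integrable_exp_mul_of_integrable_exp_mul_abs hX hc (abs_le.2 ⟨ht.1.le, ht.2.le⟩)

lemma eventually_mgf_le_one_add [IsProbabilityMeasure μ]
    (h₀ : 0 ∈ interior (integrableExpSet X μ)) (hmean : μ[X] = 0) {δ : ℝ} (hδ : 0 < δ) :
    ∀ᶠ t in 𝓝 0, mgf X μ t ≤ 1 + δ * |t| := by
  have hderiv := hasDerivAt_mgf h₀
  simp only [zero_mul, exp_zero, mul_one, hmean] at hderiv
  filter_upwards [(hasDerivAt_iff_isLittleO_nhds_zero.1 hderiv).def hδ] with t ht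
  simp only [zero_add, mgf_zero, smul_zero, sub_zero, norm_eq_abs] at ht
  linarith [le_abs_self (mgf X μ t - 1)]

lemma exists_pos_mgf_le_exp [IsProbabilityMeasure μ]
    (h₀ : 0 ∈ interior (integrableExpSet X μ)) (hmean : μ[X] = 0) {δ : ℝ} (hδ : 0 < δ) :
    ∃ t > 0, (t ∈ integrableExpSet X μ ∧ -t ∈ integrableExpSet X μ) ∧
      (mgf X μ t ≤ exp (δ * t) ∧ mgf X μ (-t) ≤ exp (δ * t)) := by
  have hgood : ∀ᶠ t in 𝓝 0, t ∈ integrableExpSet X μ ∧ mgf X μ t ≤ exp (δ * |t|) := by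
    filter_upwards [mem_interior_iff_mem_nhds.1 h₀, eventually_mgf_le_one_add h₀ hmean hδ]
      with t hint hmgf
    exact ⟨hint, hmgf.trans (by linarith [add_one_le_exp (δ * |t|)])⟩
  obtain ⟨r, hr, hball⟩ := Metric.eventually_nhds_iff.1 hgood
  have hdist : ∀ s : ℝ, |s| = r / 2 → dist s 0 < r := fun s hs ↦ by
    rw [Real.dist_eq, sub_zero, hs]; linarith
  obtain ⟨hpos, hmgf_pos⟩ := hball (hdist (r / 2) (abs_of_pos (half_pos hr)))
  obtain ⟨hneg, hmgf_neg⟩ := hball (hdist (-(r / 2)) (by rw [abs_neg, abs_of_pos (half_pos hr)]))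
  rw [abs_of_pos (half_pos hr)] at hmgf_pos
  rw [abs_neg, abs_of_pos (half_pos hr)] at hmgf_neg
  exact ⟨r / 2, half_pos hr, ⟨hpos, hneg⟩, hmgf_pos, hmgf_neg⟩

end CentredMGF

section IID

variable {Ω : Type*} {m : MeasurableSpace Ω} {μ : Measure Ω} {X : ℕ → Ω → ℝ}

lemma mgf_sum_of_identDistrib_zero (hmeas : ∀ i, Measurable (X i)) (hindep : iIndepFun X μ)
    (hident : ∀ i, IdentDistrib (X i) (X 0) μ μ) (s : Finset ℕ) (t : ℝ) :
    mgf (∑ j ∈ s, X j) μ t = mgf (X 0) μ t ^ #s := by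
  rw [hindep.mgf_sum hmeas, prod_congr rfl fun j _ ↦ mgf_congr_of_identDistrib _ _ (hident j) t,
    prod_const]

lemma integrable_exp_mul_sum_of_identDistrib [IsFiniteMeasure μ] (hmeas : ∀ i, Measurable (X i))
    (hindep : iIndepFun X μ) (hident : ∀ i, IdentDistrib (X i) (X 0) μ μ) {t : ℝ}
    (ht : t ∈ integrableExpSet (X 0) μ) (s : Finset ℕ) :
    Integrable (fun ω ↦ exp (t * (∑ j ∈ s, X j) ω)) μ :=
  hindep.integrable_exp_mul_sum hmeas fun j _ ↦
    ((hident j).comp (measurable_const_mul t).exp).integrable_iff.2 ht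

lemma measureReal_le_abs_sum_le [IsFiniteMeasure μ] (hmeas : ∀ i, Measurable (X i))
    (hindep : iIndepFun X μ) (hident : ∀ i, IdentDistrib (X i) (X 0) μ μ) {t : ℝ} (ht : 0 ≤ t)
    (hpos : t ∈ integrableExpSet (X 0) μ) (hneg : -t ∈ integrableExpSet (X 0) μ)
    (s : Finset ℕ) (r : ℝ) :
    μ.real {ω | r ≤ |∑ j ∈ s, X j ω|} ≤
      exp (-t * r) * (mgf (X 0) μ t ^ #s + mgf (X 0) μ (-t) ^ #s) := by
  have hsplit : {ω | r ≤ |∑ j ∈ s, X j ω|} ⊆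
      {ω | r ≤ (∑ j ∈ s, X j) ω} ∪ {ω | (∑ j ∈ s, X j) ω ≤ -r} := fun ω hω ↦ by
    simp only [Set.mem_ofPred_eq, Set.mem_union, Finset.sum_apply] at hω ⊢
    exact (le_abs'.1 hω).symm.imp id fun h ↦ by linarith
  have upper := measure_ge_le_exp_mul_mgf r ht (integrable_exp_mul_sum_of_identDistrib hmeas
    hindep hident hpos s)
  have lower := measure_le_le_exp_mul_mgf (-r) (neg_nonpos.2 ht)
    (integrable_exp_mul_sum_of_identDistrib hmeas hindep hident hneg s)
  rw [mgf_sum_of_identDistrib_zero hmeas hindep hident] at upper lower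
  rw [neg_mul_neg] at lower
  calc μ.real {ω | r ≤ |∑ j ∈ s, X j ω|}
      ≤ μ.real {ω | r ≤ (∑ j ∈ s, X j) ω} + μ.real {ω | (∑ j ∈ s, X j) ω ≤ -r} :=
        (measureReal_mono hsplit).trans (measureReal_union_le _ _)
    _ ≤ _ := by rw [mul_add]; exact add_le_add upper lower

lemma abs_sum_range_sub_sum_range (a : ℕ → ℝ) (i n : ℕ) :
    |∑ j ∈ range i, a j - ∑ j ∈ range n, a j| = |∑ j ∈ Ico (min i n) (max i n), a j| := by
  rcases le_total n i with h | h
  · rw [min_eq_right h, max_eq_left h, sum_Ico_eq_sub _ h]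
  · rw [min_eq_left h, max_eq_right h, sum_Ico_eq_sub _ h, abs_sub_comm]

lemma natCast_card_Ico_min_max (i n : ℕ) : (#(Ico (min i n) (max i n)) : ℝ) = |(i : ℝ) - n| := by
  rw [Nat.card_Ico]
  rcases le_total n i with h | h
  · rw [min_eq_right h, max_eq_left h, Nat.cast_sub h, abs_of_nonneg (by simpa using h)]
  · rw [min_eq_left h, max_eq_right h, Nat.cast_sub h, abs_of_nonpos (by simpa using h)]; ring

lemma measureReal_le_abs_sum_range_sub_le [IsFiniteMeasure μ] (hmeas : ∀ i, Measurable (X i))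
    (hindep : iIndepFun X μ) (hident : ∀ i, IdentDistrib (X i) (X 0) μ μ) {t δ : ℝ} (ht : 0 ≤ t)
    (hδ : 0 ≤ δ) (hpos : t ∈ integrableExpSet (X 0) μ) (hneg : -t ∈ integrableExpSet (X 0) μ)
    (hmgf_pos : mgf (X 0) μ t ≤ exp (δ * t)) (hmgf_neg : mgf (X 0) μ (-t) ≤ exp (δ * t))
    {i n : ℕ} {K : ℝ} (hin : |(i : ℝ) - n| ≤ K) (r : ℝ) :
    μ.real {ω | r ≤ |∑ j ∈ range i, X j ω - ∑ j ∈ range n, X j ω|} ≤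
      2 * exp (-t * r + δ * t * K) := by
  set s := Ico (min i n) (max i n)
  simp only [abs_sum_range_sub_sum_range (X · _)]
  refine (measureReal_le_abs_sum_le hmeas hindep hident ht hpos hneg s r).trans ?_
  have hcard : (#s : ℝ) * (δ * t) ≤ δ * t * K := by
    rw [mul_comm]; gcongr; exact (natCast_card_Ico_min_max i n).trans_le hin
  calc exp (-t * r) * (mgf (X 0) μ t ^ #s + mgf (X 0) μ (-t) ^ #s)
      ≤ exp (-t * r) * (2 * exp (δ * t) ^ #s) := by
        gcongr
        linarith [pow_le_pow_left₀ mgf_nonneg hmgf_pos #s,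
          pow_le_pow_left₀ mgf_nonneg hmgf_neg #s]
    _ = 2 * exp (-t * r + #s * (δ * t)) := by rw [exp_add, exp_nat_mul]; ring
    _ ≤ 2 * exp (-t * r + δ * t * K) := by gcongr

end IID

end ProbabilityTheory

lemma exists_mem_window_of_le_sSup (f : ℕ → ℝ) (n : ℕ) {K r : ℝ} (hK : 0 ≤ K)
    (h : r ≤ sSup {x | ∃ i : ℕ, |(i : ℝ) - n| ≤ K ∧ x = f i}) :
    ∃ i ∈ range (n + ⌈K⌉₊ + 1), |(i : ℝ) - n| ≤ K ∧ r ≤ f i := by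
  have hwindow : ∀ i : ℕ, |(i : ℝ) - n| ≤ K → i ∈ range (n + ⌈K⌉₊ + 1) := fun i hi ↦ by
    rw [mem_range, Nat.lt_succ_iff, ← Nat.cast_le (α := ℝ)]
    push_cast
    linarith [(abs_le.1 hi).2, Nat.le_ceil K]
  set T := {x | ∃ i : ℕ, |(i : ℝ) - n| ≤ K ∧ x = f i}
  have hfin : T.Finite :=
    ((range (n + ⌈K⌉₊ + 1)).finite_toSet.image f).subset fun _ ⟨i, hi, hx⟩ ↦
      ⟨i, hwindow i hi, hx.symm⟩
  have hne : T.Nonempty := ⟨f n, n, by simpa using hK, rfl⟩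
  obtain ⟨i, hi, hx⟩ := hne.csSup_mem hfin
  exact ⟨i, hwindow i hi, hi, hx ▸ h⟩

lemma measureReal_le_sSup_window_le {Ω : Type*} {m : MeasurableSpace Ω} {μ : Measure Ω}
    [IsFiniteMeasure μ] (F : ℕ → Ω → ℝ) (n : ℕ) {K r b : ℝ} (hK : 0 ≤ K)
    (hb : ∀ i : ℕ, |(i : ℝ) - n| ≤ K → μ.real {ω | r ≤ F i ω} ≤ b) :
    μ.real {ω | sSup {x | ∃ i : ℕ, |(i : ℝ) - n| ≤ K ∧ x = F i ω} ≥ r} ≤ (n + K + 2) * b := by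
  set W := (range (n + ⌈K⌉₊ + 1)).filter fun i : ℕ ↦ |(i : ℝ) - n| ≤ K
  have hcover : {ω | sSup {x | ∃ i : ℕ, |(i : ℝ) - n| ≤ K ∧ x = F i ω} ≥ r} ⊆
      ⋃ i ∈ W, {ω | r ≤ F i ω} := fun ω hω ↦ by
    obtain ⟨i, hi, hiK, hri⟩ := exists_mem_window_of_le_sSup (F · ω) n hK hω
    exact Set.mem_biUnion (mem_filter.2 ⟨hi, hiK⟩) hri
  have hb₀ : 0 ≤ b := measureReal_nonneg.trans (hb n (by simpa using hK))
  have hcard : (#W : ℝ) ≤ n + K + 2 := by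
    calc (#W : ℝ) ≤ #(range (n + ⌈K⌉₊ + 1)) := by exact_mod_cast card_filter_le _ _
      _ ≤ n + K + 2 := by
        rw [card_range]; push_cast; linarith [Nat.ceil_lt_add_one hK]
  calc μ.real _ ≤ ∑ i ∈ W, μ.real {ω | r ≤ F i ω} :=
        (measureReal_mono hcover (measure_ne_top _ _)).trans (measureReal_biUnion_finset_le _ _)
    _ ≤ #W * b := by
        simpa using sum_le_sum fun i hi ↦ hb i (mem_filter.1 hi).2
    _ ≤ (n + K + 2) * b := by gcongr

lemma summable_natCast_mul_exp_neg_mul_sqrt {b : ℝ} (hb : 0 < b) :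
    Summable fun n : ℕ ↦ n * exp (-b * √n) := by
  have hlim : Tendsto (fun n : ℕ ↦ (b * √n) ^ 6 * exp (-(b * √n))) atTop (𝓝 0) :=
    (tendsto_pow_mul_exp_neg_atTop_nhds_zero 6).comp
      ((tendsto_sqrt_atTop.comp tendsto_natCast_atTop_atTop).const_mul_atTop hb)
  refine Summable.of_norm_bounded_eventually_nat
    ((summable_one_div_nat_pow.2 one_lt_two).mul_left (b ^ 6)⁻¹) ?_
  filter_upwards [hlim.eventually (eventually_le_nhds one_pos), eventually_ge_atTop 1]
    with n hle hn
  have hn : (1 : ℝ) ≤ n := by exact_mod_cast hn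
  have hsqrt : √(n : ℝ) ^ 6 = n ^ 3 := by
    rw [show 6 = 2 * 3 by rfl, pow_mul, sq_sqrt (by positivity)]
  rw [mul_pow, hsqrt] at hle
  rw [norm_of_nonneg (by positivity), neg_mul]
  calc n * exp (-(b * √n)) = (b ^ 6)⁻¹ * (1 / n ^ 2) * (b ^ 6 * n ^ 3 * exp (-(b * √n))) := by
        field_simp
    _ ≤ (b ^ 6)⁻¹ * (1 / n ^ 2) := mul_le_of_le_one_right (by positivity) hle

lemma summable_add_mul_exp_neg {k : ℕ → ℝ} {a b C : ℝ} (ha : 0 < a) (hb : 0 < b)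
    (hk : ∀ᶠ n : ℕ in atTop, b * √n ≤ k n ∧ k n ≤ C * n) :
    Summable fun n : ℕ ↦ (n + k n + 2) * exp (-a * k n) := by
  refine Summable.of_norm_bounded_eventually_nat
    ((summable_natCast_mul_exp_neg_mul_sqrt (mul_pos ha hb)).mul_left (C + 3)) ?_
  filter_upwards [hk, eventually_ge_atTop 1] with n ⟨hlow, hup⟩ hn
  have hn : (1 : ℝ) ≤ n := by exact_mod_cast hn
  have hk₀ : 0 ≤ k n := (by positivity : 0 ≤ b * √n).trans hlow
  rw [norm_of_nonneg (by positivity)]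
  calc (n + k n + 2) * exp (-a * k n) ≤ ((C + 3) * n) * exp (-(a * b) * √n) := by
        refine mul_le_mul (by linarith) (exp_le_exp.2 ?_) (by positivity) (by linarith)
        nlinarith [mul_le_mul_of_nonneg_left hlow ha.le]
    _ = (C + 3) * (n * exp (-(a * b) * √n)) := by ring

lemma eventually_sqrt_le_sqrt_mul_log_log {M : ℝ} (hM : 0 ≤ M) :
    ∀ᶠ n : ℕ in atTop, M * √n ≤ M * √(n * log (log n)) ∧ M * √(n * log (log n)) ≤ M * n := by
  have hloglog : Tendsto (fun n : ℕ ↦ log (log n)) atTop atTop :=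
    (tendsto_log_atTop.comp tendsto_log_atTop).comp tendsto_natCast_atTop_atTop
  filter_upwards [hloglog.eventually_ge_atTop 1] with n hn
  have hle : log (log n) ≤ n :=
    (log_le_self (log_natCast_nonneg n)).trans (log_le_self n.cast_nonneg)
  constructor
  · gcongr; nlinarith [n.cast_nonneg (α := ℝ)]
  · gcongr; calc √(n * log (log n)) ≤ √(n * n) := by gcongr
      _ = n := sqrt_mul_self n.cast_nonneg

theorem stmt_1_general
    {Ω : Type*} [MeasureSpace Ω] [IsProbabilityMeasure (ℙ : Measure Ω)]
    (X : ℕ → Ω → ℝ)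
    (hmeas : ∀ i, Measurable (X i))
    (hindep : iIndepFun X ℙ)
    (hident : ∀ i, IdentDistrib (X i) (X 0) ℙ ℙ)
    (hmean : ∫ ω, X 0 ω = 0)
    (hexp : ∃ c > 0, Integrable (fun ω => Real.exp (c * |X 0 ω|)))
    (M : ℝ) (hM : 0 < M)
    (S : ℕ → Ω → ℝ) (hS : ∀ n ω, S n ω = ∑ i ∈ Finset.range n, X i ω)
    (k : ℕ → ℝ) (hk : ∀ n : ℕ, k n = M * Real.sqrt (n * Real.log (Real.log n))) :
    ∀ ε > (0 : ℝ), Summable (fun n : ℕ =>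
      (ℙ {ω | sSup {x : ℝ | ∃ i : ℕ, |(i : ℝ) - (n : ℝ)| ≤ k n ∧ x = |S i ω - S n ω|}
        ≥ ε * k n}).toReal) := by
  intro ε hε
  obtain ⟨c, hc₀, hc⟩ := hexp
  obtain ⟨t, ht, ⟨hpos, hneg⟩, hmgf_pos, hmgf_neg⟩ := exists_pos_mgf_le_exp
    (zero_mem_interior_integrableExpSet (hmeas 0).aemeasurable hc₀ hc) hmean (half_pos hε)
  obtain rfl : S = fun n ω ↦ ∑ i ∈ range n, X i ω := funext fun n ↦ funext (hS n)
  have hk₀ : ∀ n, 0 ≤ k n := fun n ↦ by rw [hk]; positivity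
  have hterm : ∀ n : ℕ, (ℙ {ω | sSup {x : ℝ | ∃ i : ℕ, |(i : ℝ) - (n : ℝ)| ≤ k n ∧
      x = |∑ j ∈ range i, X j ω - ∑ j ∈ range n, X j ω|} ≥ ε * k n}).toReal ≤
      2 * ((n + k n + 2) * exp (-(t * ε / 2) * k n)) := fun n ↦ by
    refine (measureReal_le_sSup_window_le _ n (hk₀ n) fun i hi ↦
      measureReal_le_abs_sum_range_sub_le hmeas hindep hident ht.le (half_pos hε).le hpos hneg
        hmgf_pos hmgf_neg hi (ε * k n)).trans_eq ?_
    ring_nf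
  have hwindow : ∀ᶠ n : ℕ in atTop, M * √n ≤ k n ∧ k n ≤ M * n :=
    (eventually_sqrt_le_sqrt_mul_log_log hM.le).mono fun n hn ↦ by rwa [hk]
  exact ((summable_add_mul_exp_neg (half_pos (mul_pos ht hε)) hM hwindow).mul_left 2)
    |>.of_nonneg_of_le (fun _ ↦ measureReal_nonneg) hterm

theorem stmt_1
    {Ω : Type*} [MeasureSpace Ω] [IsProbabilityMeasure (ℙ : Measure Ω)]
    (X : ℕ → Ω → ℝ)
    (hmeas : ∀ i, Measurable (X i))
    (hindep : iIndepFun X ℙ)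
    (hident : ∀ i, IdentDistrib (X i) (X 0) ℙ ℙ)
    (hmean : ∫ ω, X 0 ω = 0)
    (hexp : ∃ c > 0, Integrable (fun ω => Real.exp (c * |X 0 ω|)))
    (M : ℝ) (hM : 0 < M)
    (S : ℕ → Ω → ℝ) (hS : ∀ n ω, S n ω = ∑ i ∈ Finset.range n, X i ω)
    (k : ℕ → ℝ) (hk : ∀ n : ℕ, k n = M * Real.sqrt (n * Real.log (Real.log n)))
    (hLDP : ∀ ε > (0 : ℝ), ∃ c > (0 : ℝ), ∀ᶠ n : ℕ in atTop,
      (ℙ {ω | |S n ω| ≥ ε * n}).toReal ≤ Real.exp (-c * n)) :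
    ∀ ε > (0 : ℝ), Summable (fun n : ℕ =>
      (ℙ {ω | sSup {x : ℝ | ∃ i : ℕ, |(i : ℝ) - (n : ℝ)| ≤ k n ∧ x = |S i ω - S n ω|}
        ≥ ε * k n}).toReal) :=
  stmt_1_general X hmeas hindep hident hmean hexp M hM S hS k hk
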